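/- Let G be a linearly ordered abelian group with non-negative cone G⁺. The map M ↦ M ∩ (−M) is a bijection from the set of submonoids M with G⁺ ⊆ M ⊆ G to the set of convex subgroups H of G; the inverse sends H to G⁺ ∪ H. -/

import Mathlib

/-- An intermediate monoid `G⁺ ⊆ M ⊆ G`, as a set. -/
def IsIntermediateMonoid {G : Type*} [AddCommGroup G] [LinearOrder G] [IsOrderedAddMonoid G] (M : Set G) : Prop :=
  (0 : G) ∈ M ∧ (∀ a ∈ M, ∀ b ∈ M, a + b ∈ M) ∧ {g : G | 0 ≤ g} ⊆ M

/-- A convex subgroup, as a set. -/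
def IsConvexSubgroupSet {G : Type*} [AddCommGroup G] [LinearOrder G] [IsOrderedAddMonoid G] (H : Set G) : Prop :=
  (0 : G) ∈ H ∧ (∀ x ∈ H, ∀ y ∈ H, x + y ∈ H) ∧ (∀ x ∈ H, -x ∈ H) ∧
    (∀ x h : G, h ∈ H → 0 ≤ x → x ≤ h → x ∈ H)

/-!
`M ∩ (−M)` is the group of units of `M`. It is convex because `0 ≤ x ≤ h` with `−h ∈ M` gives
`−x = (h − x) + (−h) ∈ M`, and `M` is recovered from it because, `G` being linearly ordered,
every `g ∈ M` is either nonnegative or has `−g ≥ 0` in `M`. Conversely `G⁺ ∪ H` is closed under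
addition since a sum `a + b` with `a ≥ 0`, `b ∈ H` is either nonnegative or satisfies
`0 ≤ −(a + b) ≤ −b`, which puts it in `H` by convexity.
-/

section

variable {G : Type*} [AddCommGroup G] [LinearOrder G] [IsOrderedAddMonoid G]

namespace IsIntermediateMonoid

variable {M : Set G}

theorem isConvexSubgroupSet_inter_neg (hM : IsIntermediateMonoid M) :
    IsConvexSubgroupSet (M ∩ -M) := by
  obtain ⟨zero_mem, add_mem, nonneg_subset⟩ := hM
  refine ⟨⟨zero_mem, by simpa using zero_mem⟩, ?_, ?_, ?_⟩
  · rintro x ⟨hx, hx'⟩ y ⟨hy, hy'⟩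
    refine ⟨add_mem x hx y hy, ?_⟩
    simpa only [Set.mem_neg, neg_add, add_comm] using add_mem _ hx' _ hy'
  · rintro x ⟨hx, hx'⟩
    exact ⟨hx', by simpa using hx⟩
  · rintro x h ⟨-, hh'⟩ hx hxh
    refine ⟨nonneg_subset hx, ?_⟩
    rw [Set.mem_neg, show -x = (h - x) + -h by abel]
    exact add_mem _ (nonneg_subset (sub_nonneg.2 hxh)) _ hh'

theorem nonneg_union_inter_neg (hM : IsIntermediateMonoid M) :
    {g : G | 0 ≤ g} ∪ (M ∩ -M) = M := by
  refine (Set.union_subset hM.2.2 Set.inter_subset_left).antisymm fun x hx => ?_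
  rcases le_total 0 x with hx0 | hx0
  · exact Or.inl hx0
  · exact Or.inr ⟨hx, hM.2.2 (neg_nonneg.2 hx0)⟩

end IsIntermediateMonoid

namespace IsConvexSubgroupSet

variable {H : Set G}

theorem add_mem_nonneg_union_of_nonneg (hH : IsConvexSubgroupSet H) {a b : G} (ha : 0 ≤ a)
    (hb : b ∈ H) : a + b ∈ {g : G | 0 ≤ g} ∪ H := by
  obtain ⟨-, -, neg_mem, convex⟩ := hH
  rcases le_total 0 (a + b) with hab | hab
  · exact Or.inl hab
  · have h_le : -(a + b) ≤ -b := neg_le_neg (le_add_of_nonneg_left ha)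
    have := convex _ _ (neg_mem b hb) (neg_nonneg.2 hab) h_le
    exact Or.inr (by simpa using neg_mem _ this)

theorem isIntermediateMonoid_nonneg_union (hH : IsConvexSubgroupSet H) :
    IsIntermediateMonoid ({g : G | 0 ≤ g} ∪ H) := by
  refine ⟨Or.inr hH.1, ?_, Set.subset_union_left⟩
  rintro a (ha | ha) b (hb | hb)
  · exact Or.inl (add_nonneg ha hb)
  · exact hH.add_mem_nonneg_union_of_nonneg ha hb
  · exact add_comm a b ▸ hH.add_mem_nonneg_union_of_nonneg hb ha
  · exact Or.inr (hH.2.1 a ha b hb)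

theorem nonneg_union_inter_neg (hH : IsConvexSubgroupSet H) :
    ({g : G | 0 ≤ g} ∪ H) ∩ -({g : G | 0 ≤ g} ∪ H) = H := by
  obtain ⟨zero_mem, -, neg_mem, -⟩ := hH
  refine Set.Subset.antisymm ?_ fun x hx => ⟨Or.inr hx, Or.inr (neg_mem x hx)⟩
  rintro x ⟨hx | hx, hx' | hx'⟩
  · rwa [le_antisymm (neg_nonneg.1 hx') hx]
  · simpa using neg_mem _ hx'
  all_goals exact hx

end IsConvexSubgroupSet

end

/-- The map `M ↦ M ∩ (−M)` is a bijection from intermediate monoids `G⁺ ⊆ M ⊆ G`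
to convex subgroups of `G`, with inverse `H ↦ G⁺ ∪ H`. -/
theorem stmt_6 {G : Type*} [AddCommGroup G] [LinearOrder G] [IsOrderedAddMonoid G] :
    Set.BijOn (fun M : Set G => M ∩ (-M))
      {M : Set G | IsIntermediateMonoid M} {H : Set G | IsConvexSubgroupSet H} ∧
    (∀ M : Set G, IsIntermediateMonoid M → {g : G | 0 ≤ g} ∪ (M ∩ (-M)) = M) ∧
    (∀ H : Set G, IsConvexSubgroupSet H →
      ({g : G | 0 ≤ g} ∪ H) ∩ (-({g : G | 0 ≤ g} ∪ H)) = H) := by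
  have hinv : Set.InvOn (fun H : Set G => {g : G | 0 ≤ g} ∪ H) (fun M : Set G => M ∩ -M)
      {M | IsIntermediateMonoid M} {H | IsConvexSubgroupSet H} :=
    ⟨fun _ hM => hM.nonneg_union_inter_neg, fun _ hH => hH.nonneg_union_inter_neg⟩
  refine ⟨hinv.bijOn ?_ ?_, fun _ hM => hinv.1 hM, fun _ hH => hinv.2 hH⟩
  · exact fun _ hM => hM.isConvexSubgroupSet_inter_neg
  · exact fun _ hH => hH.isIntermediateMonoid_nonneg_union
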